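/- arXiv:2009.07257 — 11 statements merged into one kernel-verified Lean document; each statement's English description precedes it below -/
import Mathlib

section
/- Let H be a complex Hilbert space and let a, b, e ∈ H with ‖e‖ = 1. Then |⟨a,e⟩⟨e,b⟩| ≤ (|⟨a,b⟩| + ‖a‖‖b‖)/2. -/
open scoped InnerProductSpace

/-! Since the reflection `R = 2P - 1` in the line `ℂ ∙ e` is an isometry, `⟪a, P b⟫` is the
average of `⟪a, b⟫` and `⟪a, R b⟫`, and `‖⟪a, R b⟫‖ ≤ ‖a‖ ‖R b‖ = ‖a‖ ‖b‖`. -/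

namespace Submodule

variable {𝕜 E : Type*} [RCLike 𝕜] [NormedAddCommGroup E] [InnerProductSpace 𝕜 E]
  (K : Submodule 𝕜 E) [K.HasOrthogonalProjection]

theorem two_mul_inner_starProjection_right (a b : E) :
    2 * ⟪a, K.starProjection b⟫_𝕜 = ⟪a, b⟫_𝕜 + ⟪a, K.reflection b⟫_𝕜 := by
  rw [reflection_apply, inner_sub_right, two_smul, inner_add_right]
  ring

theorem norm_inner_starProjection_right_le (a b : E) :
    ‖⟪a, K.starProjection b⟫_𝕜‖ ≤ (‖⟪a, b⟫_𝕜‖ + ‖a‖ * ‖b‖) / 2 := by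
  have hR : ‖⟪a, K.reflection b⟫_𝕜‖ ≤ ‖a‖ * ‖b‖ :=
    (norm_inner_le_norm a _).trans_eq (by rw [LinearIsometryEquiv.norm_map])
  have h2 : 2 * ‖⟪a, K.starProjection b⟫_𝕜‖ ≤ ‖⟪a, b⟫_𝕜‖ + ‖a‖ * ‖b‖ := by
    calc 2 * ‖⟪a, K.starProjection b⟫_𝕜‖ = ‖⟪a, b⟫_𝕜 + ⟪a, K.reflection b⟫_𝕜‖ := by
          rw [← two_mul_inner_starProjection_right, norm_mul, RCLike.norm_two]
      _ ≤ ‖⟪a, b⟫_𝕜‖ + ‖a‖ * ‖b‖ := (norm_add_le _ _).trans (by gcongr)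
  linarith

end Submodule

theorem stmt_0_general {H : Type*} [NormedAddCommGroup H] [InnerProductSpace ℂ H]
    (a b e : H) (he : ‖e‖ = 1) :
    ‖⟪a, e⟫_ℂ * ⟪e, b⟫_ℂ‖ ≤ (‖⟪a, b⟫_ℂ‖ + ‖a‖ * ‖b‖) / 2 := by
  have hproj : ⟪a, (ℂ ∙ e).starProjection b⟫_ℂ = ⟪a, e⟫_ℂ * ⟪e, b⟫_ℂ := by
    rw [Submodule.starProjection_unit_singleton ℂ he, inner_smul_right, mul_comm]
  rw [← hproj]
  exact (ℂ ∙ e).norm_inner_starProjection_right_le a b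

theorem stmt_0 {H : Type*} [NormedAddCommGroup H] [InnerProductSpace ℂ H] [CompleteSpace H]
    (a b e : H) (he : ‖e‖ = 1) :
    ‖⟪a, e⟫_ℂ * ⟪e, b⟫_ℂ‖ ≤ (‖⟪a, b⟫_ℂ‖ + ‖a‖ * ‖b‖) / 2 :=
  stmt_0_general a b e he
end

section
/- Let A, B be bounded linear operators on a complex Hilbert space H and let x ∈ H be a unit vector. Then |⟨Ax,x⟩ ⟨Bx,x⟩| ≤ (|⟨BAx,x⟩| + ‖Ax‖‖B*x‖)/2. -/
/-!
This is Buzano's inequality `|⟪u, e⟫ ⟪e, v⟫| ≤ (|⟪u, v⟫| + ‖u‖ ‖v‖) / 2` for `u = A x`,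
`v = B* x`, `e = x`. To prove it, reflect `v` in the line through the unit vector `e`: the image
`w = 2 ⟪e, v⟫ e - v` has the norm of `v` and `v + w = 2 ⟪e, v⟫ e`, so
`2 ⟪u, e⟫ ⟪e, v⟫ = ⟪u, v⟫ + ⟪u, w⟫`, and Cauchy–Schwarz bounds `|⟪u, w⟫|` by `‖u‖ ‖v‖`.
-/

open scoped InnerProductSpace

section

variable {𝕜 E : Type*} [RCLike 𝕜] [NormedAddCommGroup E] [InnerProductSpace 𝕜 E]

lemma Submodule.self_add_reflection (K : Submodule 𝕜 E) [K.HasOrthogonalProjection] (p : E) :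
    p + K.reflection p = (2 : 𝕜) • K.starProjection p := by
  rw [K.reflection_apply, add_sub_cancel, two_smul, two_smul]

theorem norm_inner_mul_inner_le (u v : E) {e : E} (he : ‖e‖ = 1) :
    ‖⟪u, e⟫_𝕜 * ⟪e, v⟫_𝕜‖ ≤ (‖⟪u, v⟫_𝕜‖ + ‖u‖ * ‖v‖) / 2 := by
  set w := (𝕜 ∙ e).reflection v
  have hsum : ⟪u, v⟫_𝕜 + ⟪u, w⟫_𝕜 = 2 * (⟪u, e⟫_𝕜 * ⟪e, v⟫_𝕜) := by
    rw [← inner_add_right, Submodule.self_add_reflection,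
      Submodule.starProjection_unit_singleton 𝕜 he, inner_smul_right, inner_smul_right]
    ring
  have hw : ‖w‖ = ‖v‖ := LinearIsometryEquiv.norm_map _ _
  calc ‖⟪u, e⟫_𝕜 * ⟪e, v⟫_𝕜‖ = ‖⟪u, v⟫_𝕜 + ⟪u, w⟫_𝕜‖ / 2 := by
        rw [hsum, norm_mul 2, RCLike.norm_two, norm_mul]; ring
    _ ≤ (‖⟪u, v⟫_𝕜‖ + ‖⟪u, w⟫_𝕜‖) / 2 := by gcongr; exact norm_add_le _ _
    _ ≤ (‖⟪u, v⟫_𝕜‖ + ‖u‖ * ‖v‖) / 2 := by gcongr; rw [← hw]; exact norm_inner_le_norm u w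

end

theorem stmt_1 {H : Type*} [NormedAddCommGroup H] [InnerProductSpace ℂ H] [CompleteSpace H]
    (A B : H →L[ℂ] H) (x : H) (hx : ‖x‖ = 1) :
    ‖⟪A x, x⟫_ℂ * ⟪B x, x⟫_ℂ‖ ≤
      (‖⟪B (A x), x⟫_ℂ‖ + ‖A x‖ * ‖(ContinuousLinearMap.adjoint B) x‖) / 2 := by
  simpa only [ContinuousLinearMap.adjoint_inner_right] using
    norm_inner_mul_inner_le (𝕜 := ℂ) (A x) (ContinuousLinearMap.adjoint B x) hx
end

section
/- Let A, B be bounded linear operators on a complex Hilbert space H and let x ∈ H be a unit vector. Then |⟨Ax,x⟩⟨Bx,x⟩|² ≤ (1/2)(|⟨BAx,x⟩|² + ‖Ax‖²‖B*x‖²). -/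
/-!
Put `u = A x` and `v = B* x`; then `⟪A x, x⟫ ⟪B x, x⟫ = ⟪u, x⟫ ⟪x, v⟫` and `⟪B A x, x⟫ = ⟪u, v⟫`.
Buzano's inequality `2 ‖⟪u, x⟫ ⟪x, v⟫‖ ≤ ‖u‖ ‖v‖ + ‖⟪u, v⟫‖` follows from
`2 ⟪x, v⟫ x = R v + v`, where `R` is the reflection in the line through `x`, an isometry.
Squaring and `((a + b) / 2) ^ 2 ≤ (a ^ 2 + b ^ 2) / 2` give the claim.
-/

open scoped InnerProductSpace

section Buzano

variable {𝕜 E : Type*} [RCLike 𝕜] [NormedAddCommGroup E] [InnerProductSpace 𝕜 E]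

theorem two_mul_norm_inner_mul_inner_le_of_norm_eq_one {x : E} (hx : ‖x‖ = 1) (u v : E) :
    2 * ‖⟪u, x⟫_𝕜 * ⟪x, v⟫_𝕜‖ ≤ ‖u‖ * ‖v‖ + ‖⟪u, v⟫_𝕜‖ := by
  set R := (𝕜 ∙ x).reflection
  have hR : ⟪u, R v⟫_𝕜 + ⟪u, v⟫_𝕜 = 2 * (⟪u, x⟫_𝕜 * ⟪x, v⟫_𝕜) := by
    rw [Submodule.reflection_apply, Submodule.starProjection_unit_singleton 𝕜 hx,
      inner_sub_right, two_smul, inner_add_right, inner_smul_right]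
    ring
  calc 2 * ‖⟪u, x⟫_𝕜 * ⟪x, v⟫_𝕜‖ = ‖⟪u, R v⟫_𝕜 + ⟪u, v⟫_𝕜‖ := by
        rw [hR, norm_mul (2 : 𝕜), RCLike.norm_two]
    _ ≤ ‖⟪u, R v⟫_𝕜‖ + ‖⟪u, v⟫_𝕜‖ := norm_add_le _ _
    _ ≤ ‖u‖ * ‖v‖ + ‖⟪u, v⟫_𝕜‖ := by
        gcongr
        simpa using norm_inner_le_norm (𝕜 := 𝕜) u (R v)

end Buzano

theorem stmt_2 {H : Type*} [NormedAddCommGroup H] [InnerProductSpace ℂ H] [CompleteSpace H]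
    (A B : H →L[ℂ] H) (x : H) (hx : ‖x‖ = 1) :
    ‖⟪A x, x⟫_ℂ * ⟪B x, x⟫_ℂ‖ ^ 2 ≤
      (1 / 2) * (‖⟪B (A x), x⟫_ℂ‖ ^ 2 +
        ‖A x‖ ^ 2 * ‖(ContinuousLinearMap.adjoint B) x‖ ^ 2) := by
  have h := two_mul_norm_inner_mul_inner_le_of_norm_eq_one (𝕜 := ℂ) hx (A x)
    (ContinuousLinearMap.adjoint B x)
  rw [ContinuousLinearMap.adjoint_inner_right, ContinuousLinearMap.adjoint_inner_right] at h
  nlinarith [sq_nonneg (‖A x‖ * ‖ContinuousLinearMap.adjoint B x‖ - ‖⟪B (A x), x⟫_ℂ‖),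
    norm_nonneg (⟪A x, x⟫_ℂ * ⟪B x, x⟫_ℂ)]
end

section
/- Let A, B be bounded linear operators on a complex Hilbert space H, let x ∈ H be a unit vector, let r ≥ 1 be real, and let f : [0,∞) → ℝ be increasing and convex. Then f(|⟨Ax,x⟩⟨Bx,x⟩|) ≤ (1/2) f(|⟨BAx,x⟩|) + (1/4)(f(‖Ax‖²) + f(‖B*x‖²)). -/
/-!
Buzano's inequality `2 |⟨u, e⟩⟨e, v⟩| ≤ |⟨u, v⟩| + ‖u‖ ‖v‖` for a unit vector `e` bounds
`|⟨Ax, x⟩⟨Bx, x⟩| = |⟨Ax, x⟩⟨x, B*x⟩|` by the mean of `|⟨BAx, x⟩|` and `‖Ax‖ ‖B*x‖`, and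
`‖Ax‖ ‖B*x‖` is at most the mean of `‖Ax‖²` and `‖B*x‖²`. Since `f` is increasing, each mean
may be pushed through `f` by convexity.
-/

open scoped InnerProductSpace
open Set

section Buzano

variable {𝕜 E : Type*} [RCLike 𝕜] [NormedAddCommGroup E] [InnerProductSpace 𝕜 E]

theorem Submodule.two_mul_norm_inner_starProjection_le (K : Submodule 𝕜 E)
    [K.HasOrthogonalProjection] (u v : E) :
    2 * ‖⟪K.starProjection u, v⟫_𝕜‖ ≤ ‖⟪u, v⟫_𝕜‖ + ‖u‖ * ‖v‖ := by
  -- `2 P = R + 1`, where the reflection `R` in `K` is an isometry.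
  have hsplit : (2 : 𝕜) * ⟪K.starProjection u, v⟫_𝕜 = ⟪K.reflection u, v⟫_𝕜 + ⟪u, v⟫_𝕜 := by
    rw [reflection_apply, inner_sub_left, two_smul, inner_add_left]
    ring
  calc 2 * ‖⟪K.starProjection u, v⟫_𝕜‖ = ‖⟪K.reflection u, v⟫_𝕜 + ⟪u, v⟫_𝕜‖ := by
        rw [← hsplit, norm_mul, RCLike.norm_two]
    _ ≤ ‖K.reflection u‖ * ‖v‖ + ‖⟪u, v⟫_𝕜‖ :=
        (norm_add_le _ _).trans (add_le_add_left (norm_inner_le_norm _ _) _)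
    _ = ‖⟪u, v⟫_𝕜‖ + ‖u‖ * ‖v‖ := by rw [LinearIsometryEquiv.norm_map, add_comm]

theorem norm_inner_mul_inner_le_of_norm_eq_one {e : E} (he : ‖e‖ = 1) (u v : E) :
    ‖⟪u, e⟫_𝕜 * ⟪e, v⟫_𝕜‖ ≤ (‖⟪u, v⟫_𝕜‖ + ‖u‖ * ‖v‖) / 2 := by
  have hproj : ⟪(𝕜 ∙ e).starProjection u, v⟫_𝕜 = ⟪u, e⟫_𝕜 * ⟪e, v⟫_𝕜 := by
    rw [Submodule.starProjection_unit_singleton 𝕜 he, inner_smul_left, inner_conj_symm]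
  have := (𝕜 ∙ e).two_mul_norm_inner_starProjection_le u v
  rw [hproj] at this
  linarith

end Buzano

theorem MonotoneOn.le_add_div_two_of_convexOn {s : Set ℝ} {f : ℝ → ℝ} (hf_mono : MonotoneOn f s)
    (hf_conv : ConvexOn ℝ s f) {t a b : ℝ} (ht : t ∈ s) (ha : a ∈ s) (hb : b ∈ s)
    (htab : t ≤ (a + b) / 2) : f t ≤ (f a + f b) / 2 := by
  have hmid : (1 / 2 : ℝ) • a + (1 / 2 : ℝ) • b = (a + b) / 2 := by
    simp only [smul_eq_mul]; ring
  calc f t ≤ f ((a + b) / 2) := hf_mono ht (hmid ▸ hf_conv.1 ha hb (by norm_num) (by norm_num)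
        (by norm_num)) htab
    _ ≤ (1 / 2 : ℝ) • f a + (1 / 2 : ℝ) • f b :=
        hmid ▸ hf_conv.2 ha hb (by norm_num) (by norm_num) (by norm_num)
    _ = (f a + f b) / 2 := by simp only [smul_eq_mul]; ring

theorem stmt_4_general {H : Type*} [NormedAddCommGroup H] [InnerProductSpace ℂ H] [CompleteSpace H]
    (A B : H →L[ℂ] H) (x : H) (hx : ‖x‖ = 1)
    (f : ℝ → ℝ) (hf_mono : MonotoneOn f (Set.Ici 0))
    (hf_conv : ConvexOn ℝ (Set.Ici 0) f) :
    f (‖⟪A x, x⟫_ℂ * ⟪B x, x⟫_ℂ‖) ≤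
      (1 / 2) * f (‖⟪B (A x), x⟫_ℂ‖) +
        (1 / 4) * (f (‖A x‖ ^ 2) + f (‖(ContinuousLinearMap.adjoint B) x‖ ^ 2)) := by
  set u := A x
  set v := ContinuousLinearMap.adjoint B x
  have hBx : ⟪B x, x⟫_ℂ = ⟪x, v⟫_ℂ := (B.adjoint_inner_right x x).symm
  have hBA : ⟪B u, x⟫_ℂ = ⟪u, v⟫_ℂ := (B.adjoint_inner_right u x).symm
  have hbuzano := norm_inner_mul_inner_le_of_norm_eq_one (𝕜 := ℂ) hx u v
  rw [← hBx, ← hBA] at hbuzano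
  have hmean : f (‖⟪A x, x⟫_ℂ * ⟪B x, x⟫_ℂ‖) ≤ (f ‖⟪B u, x⟫_ℂ‖ + f (‖u‖ * ‖v‖)) / 2 :=
    hf_mono.le_add_div_two_of_convexOn hf_conv (norm_nonneg _) (norm_nonneg _)
      (mul_nonneg (norm_nonneg _) (norm_nonneg _)) hbuzano
  have hamgm : f (‖u‖ * ‖v‖) ≤ (f (‖u‖ ^ 2) + f (‖v‖ ^ 2)) / 2 :=
    hf_mono.le_add_div_two_of_convexOn hf_conv (mul_nonneg (norm_nonneg _) (norm_nonneg _))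
      (sq_nonneg ‖u‖) (sq_nonneg ‖v‖) (by linarith [two_mul_le_add_sq ‖u‖ ‖v‖])
  linarith

theorem stmt_4 {H : Type*} [NormedAddCommGroup H] [InnerProductSpace ℂ H] [CompleteSpace H]
    (A B : H →L[ℂ] H) (x : H) (hx : ‖x‖ = 1) (r : ℝ) (hr : 1 ≤ r)
    (f : ℝ → ℝ) (hf_mono : MonotoneOn f (Set.Ici 0))
    (hf_conv : ConvexOn ℝ (Set.Ici 0) f) :
    f (‖⟪A x, x⟫_ℂ * ⟪B x, x⟫_ℂ‖) ≤
      (1 / 2) * f (‖⟪B (A x), x⟫_ℂ‖) +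
        (1 / 4) * (f (‖A x‖ ^ 2) + f (‖(ContinuousLinearMap.adjoint B) x‖ ^ 2)) :=
  stmt_4_general A B x hx f hf_mono hf_conv
end

section
/- Let A, B be bounded linear operators on a complex Hilbert space H, x a unit vector, and r ≥ 1 real. Then |⟨Ax,x⟩⟨Bx,x⟩|^r ≤ (1/2)|⟨BAx,x⟩|^r + (1/4)(‖Ax‖^{2r} + ‖B*x‖^{2r}). -/
open scoped InnerProductSpace

lemma buzano_aux {H : Type*} [NormedAddCommGroup H] [InnerProductSpace ℂ H]
    (a b e : H) (he : ‖e‖ = 1) :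
    ‖⟪a, e⟫_ℂ‖ * ‖⟪e, b⟫_ℂ‖ ≤ (‖a‖ * ‖b‖ + ‖⟪a, b⟫_ℂ‖) / 2 := by
  set a₁ := a - ⟪e, a⟫_ℂ • e with ha₁
  set b₁ := b - ⟪e, b⟫_ℂ • e with hb₁
  have hee : ⟪e, e⟫_ℂ = 1 := by
    rw [inner_self_eq_norm_sq_to_K, he]; norm_num
  have ha1e : ⟪a₁, e⟫_ℂ = 0 := by
    rw [ha₁, inner_sub_left, inner_smul_left, inner_conj_symm, hee, mul_one, sub_self]
  have hb1e : ⟪e, b₁⟫_ℂ = 0 := by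
    rw [hb₁, inner_sub_right, inner_smul_right, hee, mul_one, sub_self]
  have key : ⟪a₁, b₁⟫_ℂ = ⟪a, b⟫_ℂ - ⟪a, e⟫_ℂ * ⟪e, b⟫_ℂ := by
    have : ⟪a₁, b₁⟫_ℂ = ⟪a₁, b⟫_ℂ - ⟪e, b⟫_ℂ * ⟪a₁, e⟫_ℂ := by
      simp [hb₁, inner_sub_right, inner_smul_right]
    rw [this, ha1e, mul_zero, sub_zero, ha₁, inner_sub_left, inner_smul_left]
    rw [← inner_conj_symm e a, starRingEnd_self_apply]
  -- Pythagoras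
  have pa : ‖a₁‖ ^ 2 + ‖⟪a, e⟫_ℂ‖ ^ 2 = ‖a‖ ^ 2 := by
    have h0 : ⟪a₁, ⟪e, a⟫_ℂ • e⟫_ℂ = 0 := by
      rw [inner_smul_right, ha1e, mul_zero]
    have := norm_add_sq_eq_norm_sq_add_norm_sq_of_inner_eq_zero a₁ (⟪e, a⟫_ℂ • e) h0
    have haa : a₁ + ⟪e, a⟫_ℂ • e = a := by simp [ha₁]
    rw [haa] at this
    rw [norm_smul, he, mul_one, ← norm_inner_symm a e] at this
    nlinarith [this]
  have pb : ‖b₁‖ ^ 2 + ‖⟪e, b⟫_ℂ‖ ^ 2 = ‖b‖ ^ 2 := by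
    have hb1e' : ⟪b₁, e⟫_ℂ = 0 := by
      rw [← inner_conj_symm, hb1e, map_zero]
    have h0 : ⟪b₁, ⟪e, b⟫_ℂ • e⟫_ℂ = 0 := by
      rw [inner_smul_right, hb1e', mul_zero]
    have := norm_add_sq_eq_norm_sq_add_norm_sq_of_inner_eq_zero b₁ (⟪e, b⟫_ℂ • e) h0
    have hbb : b₁ + ⟪e, b⟫_ℂ • e = b := by simp [hb₁]
    rw [hbb] at this
    rw [norm_smul, he, mul_one] at this
    nlinarith [this]
  set s := ‖⟪a, e⟫_ℂ‖
  set t := ‖⟪e, b⟫_ℂ‖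
  set u := ‖a₁‖
  set v := ‖b₁‖
  have h1 : s * t ≤ ‖⟪a, b⟫_ℂ‖ + u * v := by
    have : s * t = ‖⟪a, b⟫_ℂ - ⟪a₁, b₁⟫_ℂ‖ := by
      rw [key]; rw [sub_sub_cancel, norm_mul]
    rw [this]
    calc ‖⟪a, b⟫_ℂ - ⟪a₁, b₁⟫_ℂ‖ ≤ ‖⟪a, b⟫_ℂ‖ + ‖⟪a₁, b₁⟫_ℂ‖ := norm_sub_le _ _
      _ ≤ ‖⟪a, b⟫_ℂ‖ + u * v := by
          gcongr; exact norm_inner_le_norm a₁ b₁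
  have h2 : s * t + u * v ≤ ‖a‖ * ‖b‖ := by
    have hs : 0 ≤ s := norm_nonneg _
    have ht : 0 ≤ t := norm_nonneg _
    have hu : 0 ≤ u := norm_nonneg _
    have hv : 0 ≤ v := norm_nonneg _
    have hna : 0 ≤ ‖a‖ := norm_nonneg _
    have hnb : 0 ≤ ‖b‖ := norm_nonneg _
    nlinarith [sq_nonneg (s * v - u * t), sq_nonneg (s * t + u * v),
      mul_nonneg hna hnb, mul_nonneg (mul_nonneg hs ht) (mul_nonneg hu hv)]
  linarith

theorem stmt_5 {H : Type*} [NormedAddCommGroup H] [InnerProductSpace ℂ H] [CompleteSpace H]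
    (A B : H →L[ℂ] H) (x : H) (hx : ‖x‖ = 1) (r : ℝ) (hr : 1 ≤ r) :
    ‖⟪A x, x⟫_ℂ * ⟪B x, x⟫_ℂ‖ ^ r ≤
      (1 / 2) * ‖⟪B (A x), x⟫_ℂ‖ ^ r +
        (1 / 4) * (‖A x‖ ^ (2 * r) + ‖(ContinuousLinearMap.adjoint B) x‖ ^ (2 * r)) := by
  have hr0 : (0:ℝ) ≤ r := le_trans zero_le_one hr
  set c := ‖A x‖ with hc
  set d := ‖(ContinuousLinearMap.adjoint B) x‖ with hd
  set w := ‖⟪B (A x), x⟫_ℂ‖ with hw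
  have hc0 : 0 ≤ c := norm_nonneg _
  have hd0 : 0 ≤ d := norm_nonneg _
  have hw0 : 0 ≤ w := norm_nonneg _
  have hb : ⟪x, (ContinuousLinearMap.adjoint B) x⟫_ℂ = ⟪B x, x⟫_ℂ :=
    ContinuousLinearMap.adjoint_inner_right B x x
  have hab : ⟪A x, (ContinuousLinearMap.adjoint B) x⟫_ℂ = ⟪B (A x), x⟫_ℂ :=
    ContinuousLinearMap.adjoint_inner_right B (A x) x
  have buz : ‖⟪A x, x⟫_ℂ * ⟪B x, x⟫_ℂ‖ ≤ (c * d + w) / 2 := by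
    have := buzano_aux (A x) ((ContinuousLinearMap.adjoint B) x) x hx
    rw [hb, hab] at this
    rw [norm_mul]
    simpa [hw] using this
  have hLnn : (0:ℝ) ≤ ‖⟪A x, x⟫_ℂ * ⟪B x, x⟫_ℂ‖ := norm_nonneg _
  have step1 : ‖⟪A x, x⟫_ℂ * ⟪B x, x⟫_ℂ‖ ^ r ≤ ((c * d + w) / 2) ^ r :=
    Real.rpow_le_rpow hLnn buz hr0
  have hcd : 0 ≤ c * d := mul_nonneg hc0 hd0
  have step2 : ((c * d + w) / 2) ^ r ≤ (1/2) * (c*d) ^ r + (1/2) * w ^ r := by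
    have hconv := (convexOn_rpow hr).2 (Set.mem_Ici.mpr hcd)
      (Set.mem_Ici.mpr hw0) (by norm_num : (0:ℝ) ≤ 1/2) (by norm_num : (0:ℝ) ≤ 1/2)
      (by norm_num : (1:ℝ)/2 + 1/2 = 1)
    simpa [smul_eq_mul, add_div, mul_comm, div_eq_inv_mul, mul_assoc, mul_add] using hconv
  have step3 : (c * d) ^ r ≤ (c ^ (2*r) + d ^ (2*r)) / 2 := by
    have hmul : (c * d) ^ r = c ^ r * d ^ r := Real.mul_rpow hc0 hd0
    have hc2 : c ^ (2*r) = (c ^ r) ^ (2:ℕ) := by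
      rw [mul_comm, Real.rpow_mul hc0, Real.rpow_two]
    have hd2 : d ^ (2*r) = (d ^ r) ^ (2:ℕ) := by
      rw [mul_comm, Real.rpow_mul hd0, Real.rpow_two]
    rw [hmul, hc2, hd2]
    nlinarith [sq_nonneg (c ^ r - d ^ r)]
  calc ‖⟪A x, x⟫_ℂ * ⟪B x, x⟫_ℂ‖ ^ r
      ≤ (1/2) * (c*d) ^ r + (1/2) * w ^ r := le_trans step1 step2
    _ ≤ (1/2) * ((c ^ (2*r) + d ^ (2*r)) / 2) + (1/2) * w ^ r := by gcongr
    _ = (1/2) * w ^ r + (1/4) * (c ^ (2*r) + d ^ (2*r)) := by ring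
end

section
/- Let T be a bounded linear operator on a complex Hilbert space H and x ∈ H a unit vector. Then |⟨Tx,x⟩|² ≤ ⟨|T|x,x⟩ ⟨|T*|x,x⟩, where |T| = (T*T)^{1/2} and |T*| = (TT*)^{1/2}. -/
set_option synthInstance.maxHeartbeats 1000000
set_option maxHeartbeats 1000000

open scoped InnerProductSpace

noncomputable def opAbs {H : Type*} [NormedAddCommGroup H] [InnerProductSpace ℂ H]
    [CompleteSpace H] (T : H →L[ℂ] H) : H →L[ℂ] H :=
  CFC.sqrt ((ContinuousLinearMap.adjoint T) * T)

noncomputable def numRadius {H : Type*} [NormedAddCommGroup H] [InnerProductSpace ℂ H]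
    (T : H →L[ℂ] H) : ℝ :=
  ⨆ x : {y : H // ‖y‖ = 1}, ‖⟪T (x : H), (x : H)⟫_ℂ‖

/-
Weighted Cauchy–Schwarz: for a strictly positive operator `S`,
`|⟪x, y⟫|² ≤ ⟪S x, x⟫ ⟪S⁻¹ y, y⟫` (write `⟪x, y⟫ = ⟪S^½ x, S^-½ y⟫`).
Apply it to `⟪T x, x⟫ = ⟪x, T* x⟫` with `S = (T*T + δ²)^½`. Operator monotonicity of the square
root gives `S ≤ |T| + δ`, and also `T S⁻¹ T* ≤ |T*|`, because
`(T S⁻¹ T*)² = T S⁻¹ (T*T) S⁻¹ T* ≤ T S⁻¹ S² S⁻¹ T* = T T*`. Finally let `δ → 0`.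
-/

open Filter Topology in
lemma le_mul_of_forall_pos_le_add_mul_mul {y a b c : ℝ} (h : ∀ δ > 0, y ≤ (a + δ * c) * b) :
    y ≤ a * b := by
  have hlim : Tendsto (fun δ : ℝ => (a + δ * c) * b) (𝓝[>] 0) (𝓝 (a * b)) := by
    have hcont : Continuous (fun δ : ℝ => (a + δ * c) * b) := by fun_prop
    simpa using (hcont.tendsto 0).mono_left nhdsWithin_le_nhds
  exact ge_of_tendsto hlim (eventually_nhdsWithin_of_forall h)

open CFC ContinuousLinearMap RCLike Ring

section CStarAlgebra

variable {A : Type*} [CStarAlgebra A] [PartialOrder A] [StarOrderedRing A]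

lemma CFC.sqrt_add_algebraMap_sq_le {a : A} (ha : 0 ≤ a) {δ : ℝ} (hδ : 0 ≤ δ) :
    sqrt (a + algebraMap ℝ A (δ ^ 2)) ≤ sqrt a + algebraMap ℝ A δ := by
  have hδA : 0 ≤ algebraMap ℝ A δ := algebraMap_nonneg A hδ
  have hsq : (sqrt a + algebraMap ℝ A δ) ^ 2 = a + algebraMap ℝ A (δ ^ 2) + (2 * δ) • sqrt a := by
    rw [sq, add_mul, mul_add, mul_add, sqrt_mul_sqrt_self a, ← Algebra.commutes, ← map_mul,
      ← Algebra.smul_def, ← sq, two_mul, add_smul]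
    abel
  calc sqrt (a + algebraMap ℝ A (δ ^ 2))
      ≤ sqrt ((sqrt a + algebraMap ℝ A δ) ^ 2) := by
        refine sqrt_le_sqrt _ _ ?_
        rw [hsq]
        exact le_add_of_nonneg_right (smul_nonneg (by positivity) (sqrt_nonneg a))
    _ = sqrt a + algebraMap ℝ A δ := sqrt_sq _ (add_nonneg (sqrt_nonneg a) hδA)

lemma CFC.conjugate_ringInverse_sqrt_le_sqrt_mul_star {a b : A} (hb : IsStrictlyPositive b)
    (hab : star a * a ≤ b) : a * (sqrt b)⁻¹ʳ * star a ≤ sqrt (a * star a) := by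
  set r := (sqrt b)⁻¹ʳ
  have hr : IsSelfAdjoint r := hb.sqrt.ringInverse.nonneg.isSelfAdjoint
  have hrbr : r * b * r = 1 := by
    have hunit := hb.isUnit_cfcSqrt
    rw [← sqrt_mul_sqrt_self b hb.nonneg, ← mul_assoc, Ring.inverse_mul_cancel _ hunit, one_mul,
      Ring.mul_inverse_cancel _ hunit]
  have hconj_nonneg : 0 ≤ a * r * star a := by
    simpa [mul_assoc] using star_right_conjugate_nonneg hb.sqrt.ringInverse.nonneg a
  have hsq_le : (a * r * star a) * (a * r * star a) ≤ a * star a := by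
    calc (a * r * star a) * (a * r * star a) = a * (r * (star a * a) * r) * star a := by
          simp only [mul_assoc]
      _ ≤ a * (r * b * r) * star a :=
          star_right_conjugate_le_conjugate (hr.conjugate_le_conjugate hab) a
      _ = a * star a := by rw [hrbr, mul_one]
  calc a * r * star a = sqrt ((a * r * star a) * (a * r * star a)) :=
        (sqrt_mul_self _ hconj_nonneg).symm
    _ ≤ sqrt (a * star a) := sqrt_le_sqrt _ _ hsq_le

end CStarAlgebra

section HilbertSpace

variable {𝕜 E : Type*} [RCLike 𝕜] [NormedAddCommGroup E] [InnerProductSpace 𝕜 E]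

lemma ContinuousLinearMap.re_inner_le_re_inner_of_le {S T : E →L[𝕜] E} (h : S ≤ T) (x : E) :
    re ⟪S x, x⟫_𝕜 ≤ re ⟪T x, x⟫_𝕜 := by
  simpa [inner_sub_left] using ((le_def S T).mp h).re_inner_nonneg_left x

lemma ContinuousLinearMap.re_inner_nonneg_of_nonneg {S : E →L[𝕜] E} (h : 0 ≤ S) (x : E) :
    0 ≤ re ⟪S x, x⟫_𝕜 := by
  simpa using re_inner_le_re_inner_of_le h x

variable {H : Type*} [NormedAddCommGroup H] [InnerProductSpace ℂ H]

lemma re_inner_algebraMap_apply (δ : ℝ) (x : H) :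
    re ⟪algebraMap ℝ (H →L[ℂ] H) δ x, x⟫_ℂ = δ * ‖x‖ ^ 2 := by
  simp [Algebra.algebraMap_eq_smul_one, ← Complex.ofReal_pow]

variable [CompleteSpace H]

lemma IsSelfAdjoint.re_inner_mul_self_apply {C : H →L[ℂ] H} (hC : IsSelfAdjoint C) (x : H) :
    re ⟪(C * C) x, x⟫_ℂ = ‖C x‖ ^ 2 := by
  simpa [hC.adjoint_eq] using (C.apply_norm_sq_eq_inner_adjoint_left x).symm

lemma norm_inner_sq_le_re_inner_mul_re_inner_ringInverse {S : H →L[ℂ] H}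
    (hS : IsStrictlyPositive S) (x y : H) :
    ‖⟪x, y⟫_ℂ‖ ^ 2 ≤ re ⟪S x, x⟫_ℂ * re ⟪S⁻¹ʳ y, y⟫_ℂ := by
  have hC : IsSelfAdjoint (sqrt S) := (sqrt_nonneg S).isSelfAdjoint
  have hD : IsSelfAdjoint (sqrt S⁻¹ʳ) := (sqrt_nonneg _).isSelfAdjoint
  have hxy : ⟪x, y⟫_ℂ = ⟪sqrt S x, sqrt S⁻¹ʳ y⟫_ℂ := by
    rw [← adjoint_inner_right, hC.adjoint_eq, ← mul_apply_eq_comp, sqrt_ringInverse,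
      Ring.mul_inverse_cancel _ hS.isUnit_cfcSqrt, one_apply_eq_self]
  calc ‖⟪x, y⟫_ℂ‖ ^ 2 ≤ (‖sqrt S x‖ * ‖sqrt S⁻¹ʳ y‖) ^ 2 := by
        rw [hxy]; gcongr; exact norm_inner_le_norm _ _
    _ = re ⟪S x, x⟫_ℂ * re ⟪S⁻¹ʳ y, y⟫_ℂ := by
        rw [mul_pow, ← hC.re_inner_mul_self_apply, ← hD.re_inner_mul_self_apply,
          sqrt_mul_sqrt_self S hS.nonneg, sqrt_mul_sqrt_self _ hS.ringInverse.nonneg]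

lemma norm_inner_apply_self_sq_le_add_mul (T : H →L[ℂ] H) (x : H) {δ : ℝ} (hδ : 0 < δ) :
    ‖⟪T x, x⟫_ℂ‖ ^ 2 ≤
      (re ⟪opAbs T x, x⟫_ℂ + δ * ‖x‖ ^ 2) * re ⟪opAbs (adjoint T) x, x⟫_ℂ := by
  set b := adjoint T * T + algebraMap ℝ (H →L[ℂ] H) (δ ^ 2)
  have hTT : 0 ≤ adjoint T * T := by simpa [star_eq_adjoint] using star_mul_self_nonneg T
  have hTb : adjoint T * T ≤ b := le_add_of_nonneg_right (algebraMap_nonneg _ (sq_nonneg δ))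
  have hb : IsStrictlyPositive b :=
    IsStrictlyPositive.nonneg_add hTT (isStrictlyPositive_algebraMap (pow_pos hδ 2))
  have hsqrt_le : re ⟪sqrt b x, x⟫_ℂ ≤ re ⟪opAbs T x, x⟫_ℂ + δ * ‖x‖ ^ 2 := by
    have h : sqrt b ≤ opAbs T + algebraMap ℝ (H →L[ℂ] H) δ := sqrt_add_algebraMap_sq_le hTT hδ.le
    simpa only [add_apply, inner_add_left, map_add, re_inner_algebraMap_apply] using
      re_inner_le_re_inner_of_le h x
  have hconj_le : T * (sqrt b)⁻¹ʳ * adjoint T ≤ opAbs (adjoint T) := by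
    simpa [opAbs, star_eq_adjoint] using
      conjugate_ringInverse_sqrt_le_sqrt_mul_star (a := T) hb (by rwa [star_eq_adjoint])
  have hconj_nonneg : 0 ≤ T * (sqrt b)⁻¹ʳ * adjoint T := by
    simpa [star_eq_adjoint] using star_right_conjugate_nonneg hb.sqrt.ringInverse.nonneg T
  calc ‖⟪T x, x⟫_ℂ‖ ^ 2 = ‖⟪x, adjoint T x⟫_ℂ‖ ^ 2 := by rw [adjoint_inner_right]
    _ ≤ re ⟪sqrt b x, x⟫_ℂ * re ⟪(sqrt b)⁻¹ʳ (adjoint T x), adjoint T x⟫_ℂ :=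
        norm_inner_sq_le_re_inner_mul_re_inner_ringInverse hb.sqrt x _
    _ = re ⟪sqrt b x, x⟫_ℂ * re ⟪(T * (sqrt b)⁻¹ʳ * adjoint T) x, x⟫_ℂ := by
        rw [mul_apply_eq_comp, mul_apply_eq_comp, adjoint_inner_right]
    _ ≤ (re ⟪opAbs T x, x⟫_ℂ + δ * ‖x‖ ^ 2) * re ⟪opAbs (adjoint T) x, x⟫_ℂ :=
        mul_le_mul hsqrt_le (re_inner_le_re_inner_of_le hconj_le x)
          (re_inner_nonneg_of_nonneg hconj_nonneg x)
          ((re_inner_nonneg_of_nonneg (sqrt_nonneg b) x).trans hsqrt_le)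

end HilbertSpace

theorem stmt_7_general {H : Type*} [NormedAddCommGroup H] [InnerProductSpace ℂ H] [CompleteSpace H]
    (T : H →L[ℂ] H) (x : H) :
    ‖⟪T x, x⟫_ℂ‖ ^ 2 ≤
      (⟪(opAbs T) x, x⟫_ℂ).re * (⟪(opAbs (ContinuousLinearMap.adjoint T)) x, x⟫_ℂ).re :=
  le_mul_of_forall_pos_le_add_mul_mul fun _ hδ => norm_inner_apply_self_sq_le_add_mul T x hδ

theorem stmt_7 {H : Type*} [NormedAddCommGroup H] [InnerProductSpace ℂ H] [CompleteSpace H]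
    (T : H →L[ℂ] H) (x : H) (hx : ‖x‖ = 1) :
    ‖⟪T x, x⟫_ℂ‖ ^ 2 ≤
      (⟪(opAbs T) x, x⟫_ℂ).re * (⟪(opAbs (ContinuousLinearMap.adjoint T)) x, x⟫_ℂ).re :=
  stmt_7_general T x
end

section
/- Let T be a bounded linear operator on a complex Hilbert space H, x a unit vector, r ≥ 1 real and 0 < α < 1. Then |⟨|T||T*|x,x⟩|^{2r} ≤ ⟨((1-α)|T|^{2r/(1-α)} + α|T*|^{2r/α})x,x⟩. -/
open scoped InnerProductSpace

/-!
By Cauchy–Schwarz and self-adjointness of `|T|`, `|⟪|T| |T*| x, x⟫| ≤ ‖|T| x‖ ‖|T*| x‖`.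
Each factor is bounded by the Hölder–McCarthy inequality `⟪A x, x⟫ ^ p ≤ ⟪A ^ p x, x⟫`
(`0 ≤ A`, `1 ≤ p`, `‖x‖ = 1`) applied to `A ^ 2`, which gives
`‖A x‖ ^ (2 r) ≤ ⟪A ^ (2 r / β) x, x⟫ ^ β` for `β = 1 - α` and `β = α`; the weighted
AM–GM inequality `a ^ (1 - α) b ^ α ≤ (1 - α) a + α b` finishes the proof.
McCarthy's inequality comes from applying the functional calculus to the tangent line of
`t ↦ t ^ p` at `t = ⟪A x, x⟫`, which lies below `t ^ p` on the spectrum `⊆ [0, ∞)`.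
-/

theorem Real.rpow_add_mul_rpow_sub_one_mul_sub_le_rpow {a t p : ℝ} (ha : 0 < a) (ht : 0 ≤ t)
    (hp : 1 ≤ p) : a ^ p + p * a ^ (p - 1) * (t - a) ≤ t ^ p := by
  have hbernoulli := one_add_mul_self_le_rpow_one_add (s := t / a - 1)
    (by linarith [div_nonneg ht ha.le]) hp
  rw [add_sub_cancel, Real.div_rpow ht ha.le, le_div_iff₀ (by positivity)] at hbernoulli
  rw [Real.rpow_sub_one ha.ne']
  calc a ^ p + p * (a ^ p / a) * (t - a) = (1 + p * (t / a - 1)) * a ^ p := by field_simp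
    _ ≤ t ^ p := hbernoulli

namespace ContinuousLinearMap

variable {H : Type*} [NormedAddCommGroup H] [InnerProductSpace ℂ H]

lemma re_inner_le_re_inner_of_le_s9 {A B : H →L[ℂ] H} (h : A ≤ B) (x : H) :
    (⟪A x, x⟫_ℂ).re ≤ (⟪B x, x⟫_ℂ).re := by
  simpa [inner_sub_left] using ((le_def A B).mp h).re_inner_nonneg_left x

lemma re_inner_nonneg_of_nonneg_s9 {A : H →L[ℂ] H} (hA : 0 ≤ A) (x : H) :
    0 ≤ (⟪A x, x⟫_ℂ).re := by
  simpa using re_inner_le_re_inner_of_le_s9 hA x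

variable [CompleteSpace H]

lemma norm_inner_apply_le_norm_mul_norm_apply {A : H →L[ℂ] H} (hA : IsSelfAdjoint A)
    (y x : H) : ‖⟪A y, x⟫_ℂ‖ ≤ ‖y‖ * ‖A x‖ := by
  rw [← adjoint_inner_right, hA.adjoint_eq]
  exact norm_inner_le_norm _ _

theorem re_inner_rpow_le_re_inner_rpow {A : H →L[ℂ] H} (hA : 0 ≤ A) {x : H} (hx : ‖x‖ = 1)
    {p : ℝ} (hp : 1 ≤ p) : (⟪A x, x⟫_ℂ).re ^ p ≤ (⟪(A ^ p) x, x⟫_ℂ).re := by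
  set a := (⟪A x, x⟫_ℂ).re
  obtain ha | ha : 0 = a ∨ 0 < a := (re_inner_nonneg_of_nonneg_s9 hA x).eq_or_lt
  · rw [← ha, Real.zero_rpow (by linarith)]
    exact re_inner_nonneg_of_nonneg_s9 CFC.rpow_nonneg x
  set c := p * a ^ (p - 1)
  have htangent : cfc (fun t : ℝ => c * t + (a ^ p - c * a)) A ≤ A ^ p := by
    rw [CFC.rpow_eq_cfc_real hA]
    refine cfc_mono (hg := (Real.continuous_rpow_const (by linarith)).continuousOn)
      fun t ht => ?_
    have := Real.rpow_add_mul_rpow_sub_one_mul_sub_le_rpow ha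
      (spectrum_nonneg_of_nonneg hA ht) hp
    linarith
  rw [cfc_add_const _ _ A, cfc_const_mul_id c A (IsSelfAdjoint.of_nonneg hA)] at htangent
  simpa [Algebra.algebraMap_eq_smul_one, hx, a] using re_inner_le_re_inner_of_le_s9 htangent x

lemma norm_apply_sq_eq_re_inner_rpow_two {A : H →L[ℂ] H} (hA : 0 ≤ A) (x : H) :
    ‖A x‖ ^ 2 = (⟪(A ^ (2 : ℝ)) x, x⟫_ℂ).re := by
  rw [show (2 : ℝ) = (2 : ℕ) by norm_num, CFC.rpow_natCast A 2 hA, pow_two A,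
    apply_norm_sq_eq_inner_adjoint_left, (IsSelfAdjoint.of_nonneg hA).adjoint_eq]
  rfl

theorem norm_apply_rpow_le_re_inner_rpow {A : H →L[ℂ] H} (hA : 0 ≤ A) {x : H}
    (hx : ‖x‖ = 1) {q : ℝ} (hq : 2 ≤ q) : ‖A x‖ ^ q ≤ (⟪(A ^ q) x, x⟫_ℂ).re :=
  calc ‖A x‖ ^ q = (‖A x‖ ^ 2) ^ (q / 2) := by
        rw [← Real.rpow_natCast, ← Real.rpow_mul (norm_nonneg _)]; ring_nf
    _ = (⟪(A ^ (2 : ℝ)) x, x⟫_ℂ).re ^ (q / 2) := by rw [norm_apply_sq_eq_re_inner_rpow_two hA]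
    _ ≤ (⟪((A ^ (2 : ℝ)) ^ (q / 2)) x, x⟫_ℂ).re :=
        re_inner_rpow_le_re_inner_rpow CFC.rpow_nonneg hx (by linarith)
    _ = (⟪(A ^ q) x, x⟫_ℂ).re := by
        rw [CFC.rpow_rpow_of_exponent_nonneg A _ _ (by norm_num) (by linarith)]; ring_nf

theorem norm_apply_rpow_le_re_inner_rpow_div_rpow {A : H →L[ℂ] H} (hA : 0 ≤ A) {x : H}
    (hx : ‖x‖ = 1) {r β : ℝ} (hβ : 0 < β) (hβr : β ≤ r) :
    ‖A x‖ ^ (2 * r) ≤ (⟪(A ^ (2 * r / β)) x, x⟫_ℂ).re ^ β :=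
  calc ‖A x‖ ^ (2 * r) = (‖A x‖ ^ (2 * r / β)) ^ β := by
        rw [← Real.rpow_mul (norm_nonneg _), div_mul_cancel₀ _ hβ.ne']
    _ ≤ (⟪(A ^ (2 * r / β)) x, x⟫_ℂ).re ^ β := by
        gcongr
        exact norm_apply_rpow_le_re_inner_rpow hA hx (by rw [le_div_iff₀ hβ]; linarith)

end ContinuousLinearMap

theorem stmt_9 {H : Type*} [NormedAddCommGroup H] [InnerProductSpace ℂ H] [CompleteSpace H]
    (T : H →L[ℂ] H) (x : H) (hx : ‖x‖ = 1) (r α : ℝ) (hr : 1 ≤ r) (hα0 : 0 < α) (hα1 : α < 1) :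
    ‖⟪(opAbs T) ((opAbs (ContinuousLinearMap.adjoint T)) x), x⟫_ℂ‖ ^ (2 * r) ≤
      (⟪((1 - α) • CFC.rpow (opAbs T) (2 * r / (1 - α)) +
          α • CFC.rpow (opAbs (ContinuousLinearMap.adjoint T)) (2 * r / α)) x, x⟫_ℂ).re := by
  have hA : 0 ≤ opAbs T := CFC.sqrt_nonneg _
  have hB : 0 ≤ opAbs (ContinuousLinearMap.adjoint T) := CFC.sqrt_nonneg _
  set A := opAbs T
  set B := opAbs (ContinuousLinearMap.adjoint T)
  set a := (⟪(A ^ (2 * r / (1 - α))) x, x⟫_ℂ).re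
  set b := (⟪(B ^ (2 * r / α)) x, x⟫_ℂ).re
  have ha : 0 ≤ a := ContinuousLinearMap.re_inner_nonneg_of_nonneg_s9 (CFC.rpow_nonneg (a := A)) x
  have hb : 0 ≤ b := ContinuousLinearMap.re_inner_nonneg_of_nonneg_s9 (CFC.rpow_nonneg (a := B)) x
  have hCS : ‖⟪A (B x), x⟫_ℂ‖ ≤ ‖B x‖ * ‖A x‖ :=
    ContinuousLinearMap.norm_inner_apply_le_norm_mul_norm_apply (IsSelfAdjoint.of_nonneg hA) _ _
  calc ‖⟪A (B x), x⟫_ℂ‖ ^ (2 * r) ≤ (‖B x‖ * ‖A x‖) ^ (2 * r) :=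
        Real.rpow_le_rpow (norm_nonneg _) hCS (by linarith)
    _ = ‖A x‖ ^ (2 * r) * ‖B x‖ ^ (2 * r) := by
        rw [Real.mul_rpow (norm_nonneg _) (norm_nonneg _), mul_comm]
    _ ≤ a ^ (1 - α) * b ^ α := by
        gcongr
        · exact ContinuousLinearMap.norm_apply_rpow_le_re_inner_rpow_div_rpow hA hx
            (by linarith) (by linarith)
        · exact ContinuousLinearMap.norm_apply_rpow_le_re_inner_rpow_div_rpow hB hx hα0
            (by linarith)
    _ ≤ (1 - α) * a + α * b :=
        Real.geom_mean_le_arith_mean2_weighted (by linarith) hα0.le ha hb (by ring)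
    _ = _ := by simp [CFC.rpow_eq_pow, a, b]
end

section
/- Let T be a bounded linear operator on a complex Hilbert space H, x a unit vector, r ≥ 1 real. Then |⟨|T||T*|x,x⟩|^r ≤ (1/2)⟨(|T|^{2r} + |T*|^{2r})x,x⟩. -/
set_option synthInstance.maxHeartbeats 1000000
set_option maxHeartbeats 1000000

open scoped InnerProductSpace

/-!
By Cauchy–Schwarz, `|⟪|T| |T*| x, x⟫| = |⟪|T*| x, |T| x⟫| ≤ ‖|T| x‖ ‖|T*| x‖`, and by AM–GM the
`r`-th power of the right side is at most the mean of `‖|T| x‖ ^ (2r) = ⟪|T|² x, x⟫ ^ r` and the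
same expression for `|T*|`. McCarthy's inequality `⟪A x, x⟫ ^ r ≤ ⟪A ^ r x, x⟫` for `A ≥ 0`,
`‖x‖ = 1`, `r ≥ 1`, applied to `A = |T|²` and `A = |T*|²`, finishes the proof.
-/

theorem Real.rpow_add_mul_sub_le_rpow {c t r : ℝ} (hc : 0 < c) (ht : 0 ≤ t) (hr : 1 ≤ r) :
    c ^ r + r * c ^ (r - 1) * (t - c) ≤ t ^ r := by
  have hs : -1 ≤ t / c - 1 := by linarith [div_nonneg ht hc.le]
  have hbern := one_add_mul_self_le_rpow_one_add hs hr
  rw [add_sub_cancel, Real.div_rpow ht hc.le, le_div_iff₀ (by positivity)] at hbern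
  calc c ^ r + r * c ^ (r - 1) * (t - c) = (1 + r * (t / c - 1)) * c ^ r := by
        rw [Real.rpow_sub_one hc.ne']; field_simp
    _ ≤ t ^ r := hbern

theorem Real.mul_rpow_le_half_add_rpow_two_mul {u v : ℝ} (hu : 0 ≤ u) (hv : 0 ≤ v) (r : ℝ) :
    (u * v) ^ r ≤ 1 / 2 * (u ^ (2 * r) + v ^ (2 * r)) := by
  rw [Real.mul_rpow hu hv, mul_comm 2 r, Real.rpow_mul hu, Real.rpow_mul hv, Real.rpow_two,
    Real.rpow_two]
  linarith [two_mul_le_add_sq (u ^ r) (v ^ r)]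

namespace ContinuousLinearMap

variable {H : Type*} [NormedAddCommGroup H] [InnerProductSpace ℂ H]

theorem re_inner_apply_le_of_le {a b : H →L[ℂ] H} (h : a ≤ b) (x : H) :
    (⟪a x, x⟫_ℂ).re ≤ (⟪b x, x⟫_ℂ).re := by
  simpa [inner_sub_left] using ((le_def a b).mp h).re_inner_nonneg_left x

variable [CompleteSpace H]

/-- McCarthy's inequality. The operator `a ^ r` dominates the tangent line of `t ↦ t ^ r` at
`c = re ⟪a x, x⟫` evaluated at `a`, whose value in the vector state of `x` is exactly `c ^ r`. -/
theorem re_inner_apply_rpow_le {a : H →L[ℂ] H} (ha : 0 ≤ a) {x : H} (hx : ‖x‖ = 1)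
    {r : ℝ} (hr : 1 ≤ r) :
    (⟪a x, x⟫_ℂ).re ^ r ≤ (⟪(a ^ r) x, x⟫_ℂ).re := by
  set c := (⟪a x, x⟫_ℂ).re
  have hc : 0 ≤ c := ((nonneg_iff_isPositive a).mp ha).re_inner_nonneg_left x
  rcases hc.eq_or_lt with hc_zero | hc_pos
  · rw [← hc_zero, Real.zero_rpow (by linarith)]
    exact ((nonneg_iff_isPositive (a ^ r)).mp CFC.rpow_nonneg).re_inner_nonneg_left x
  set k := r * c ^ (r - 1)
  have htangent : cfc (fun t : ℝ => k * t + (c ^ r - k * c)) a ≤ cfc (fun t : ℝ => t ^ r) a :=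
    cfc_mono (fun t ht => by
      have := Real.rpow_add_mul_sub_le_rpow hc_pos (spectrum_nonneg_of_nonneg (𝕜 := ℝ) ha ht) hr
      linarith) (by fun_prop) (Real.continuous_rpow_const (by linarith)).continuousOn
  rw [← CFC.rpow_eq_cfc_real ha, cfc_add_const _ _ a, cfc_const_mul_id _ a] at htangent
  have hstate : (⟪(k • a + algebraMap ℝ (H →L[ℂ] H) (c ^ r - k * c)) x, x⟫_ℂ).re = c ^ r := by
    simp [Algebra.algebraMap_eq_smul_one, hx, c]
  exact hstate ▸ re_inner_apply_le_of_le htangent x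

theorem norm_apply_rpow_two_mul_le {a : H →L[ℂ] H} (ha : 0 ≤ a) {x : H} (hx : ‖x‖ = 1)
    {r : ℝ} (hr : 1 ≤ r) :
    ‖a x‖ ^ (2 * r) ≤ (⟪(a ^ (2 * r)) x, x⟫_ℂ).re := by
  have hsq : ‖a x‖ ^ 2 = (⟪(a ^ 2) x, x⟫_ℂ).re := by
    rw [apply_norm_sq_eq_inner_adjoint_left, ha.isSelfAdjoint.adjoint_eq, sq]
    rfl
  have hpow : (a ^ 2) ^ r = a ^ (2 * r) := by
    rw [← CFC.rpow_natCast a 2, CFC.rpow_rpow_of_exponent_nonneg a _ _ (by norm_num) (by linarith)]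
    norm_num
  calc ‖a x‖ ^ (2 * r) = (⟪(a ^ 2) x, x⟫_ℂ).re ^ r := by
        rw [Real.rpow_mul (norm_nonneg _), ← hsq]; norm_num
    _ ≤ _ := hpow ▸ re_inner_apply_rpow_le ha.isSelfAdjoint.sq_nonneg hx hr

theorem norm_inner_apply_apply_rpow_le {a b : H →L[ℂ] H} (ha : 0 ≤ a) (hb : 0 ≤ b) {x : H}
    (hx : ‖x‖ = 1) {r : ℝ} (hr : 1 ≤ r) :
    ‖⟪a (b x), x⟫_ℂ‖ ^ r ≤ 1 / 2 * (⟪(a ^ (2 * r) + b ^ (2 * r)) x, x⟫_ℂ).re := by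
  have hCS : ‖⟪a (b x), x⟫_ℂ‖ ≤ ‖a x‖ * ‖b x‖ := by
    rw [show ⟪a (b x), x⟫_ℂ = ⟪b x, a x⟫_ℂ from ha.isSelfAdjoint.isSymmetric _ _, mul_comm]
    exact norm_inner_le_norm _ _
  calc ‖⟪a (b x), x⟫_ℂ‖ ^ r ≤ (‖a x‖ * ‖b x‖) ^ r :=
        Real.rpow_le_rpow (norm_nonneg _) hCS (by linarith)
    _ ≤ 1 / 2 * (‖a x‖ ^ (2 * r) + ‖b x‖ ^ (2 * r)) :=
        Real.mul_rpow_le_half_add_rpow_two_mul (norm_nonneg _) (norm_nonneg _) r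
    _ ≤ 1 / 2 * (⟪(a ^ (2 * r) + b ^ (2 * r)) x, x⟫_ℂ).re := by
        rw [add_apply, inner_add_left, Complex.add_re]
        gcongr
        · exact norm_apply_rpow_two_mul_le ha hx hr
        · exact norm_apply_rpow_two_mul_le hb hx hr

end ContinuousLinearMap

theorem stmt_10 {H : Type*} [NormedAddCommGroup H] [InnerProductSpace ℂ H] [CompleteSpace H]
    (T : H →L[ℂ] H) (x : H) (hx : ‖x‖ = 1) (r : ℝ) (hr : 1 ≤ r) :
    ‖⟪(opAbs T) ((opAbs (ContinuousLinearMap.adjoint T)) x), x⟫_ℂ‖ ^ r ≤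
      (1 / 2) * (⟪(CFC.rpow (opAbs T) (2 * r) +
          CFC.rpow (opAbs (ContinuousLinearMap.adjoint T)) (2 * r)) x, x⟫_ℂ).re :=
  ContinuousLinearMap.norm_inner_apply_apply_rpow_le (CFC.sqrt_nonneg _) (CFC.sqrt_nonneg _) hx hr
end

section
/- Let A, B be positive bounded operators on a complex Hilbert space and r ≥ 1. Then ‖((A+B)/2)^r‖ ≤ (1/2)‖A^r + B^r‖, where ‖·‖ is the operator norm. -/
/-!
Let `c = θ a + (1 - θ) b` and `l = ‖c‖`. Since `t ↦ t ^ r` is convex on `[0, ∞)`, it lies above its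
tangent line `g` at `l`, so `g(a) ≤ a ^ r` and `g(b) ≤ b ^ r` in the functional calculus. As `g` is
affine, `g(c) = θ g(a) + (1 - θ) g(b) ≤ θ a ^ r + (1 - θ) b ^ r`. Since `l` lies in the spectrum
of `c ≥ 0`, `‖c ^ r‖ = l ^ r = g(l)` lies in the spectrum of `g(c)`, hence is at most
`‖θ a ^ r + (1 - θ) b ^ r‖`.
-/

theorem Real.rpow_tangent_le {t l r : ℝ} (ht : 0 ≤ t) (hl : 0 ≤ l) (hr : 1 ≤ r) :
    l ^ r + r * l ^ (r - 1) * (t - l) ≤ t ^ r := by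
  rcases hl.eq_or_lt with rfl | hl
  · rcases hr.eq_or_lt with rfl | hr
    · simp
    · simp [Real.zero_rpow (by linarith : r ≠ 0), Real.zero_rpow (by linarith : r - 1 ≠ 0),
        Real.rpow_nonneg ht]
  · have bernoulli := one_add_mul_self_le_rpow_one_add (s := t / l - 1)
      (by linarith [div_nonneg ht hl.le]) hr
    rw [add_sub_cancel, Real.div_rpow ht hl.le, le_div_iff₀ (by positivity)] at bernoulli
    calc l ^ r + r * l ^ (r - 1) * (t - l) = (1 + r * (t / l - 1)) * l ^ r := by
          rw [Real.rpow_sub_one hl.ne']; field_simp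
      _ ≤ t ^ r := bernoulli

theorem cfc_const_add_const_mul_id {A : Type*} [Ring A] [StarRing A] [Algebra ℝ A]
    [TopologicalSpace A] [ContinuousFunctionalCalculus ℝ A IsSelfAdjoint]
    (δ κ : ℝ) (a : A) (ha : IsSelfAdjoint a := by cfc_tac) :
    cfc (fun t : ℝ ↦ δ + κ * t) a = algebraMap ℝ A δ + κ • a := by
  rw [cfc_const_add .., cfc_const_mul_id ..]

section CStarAlgebra

variable {A : Type*} [CStarAlgebra A] [PartialOrder A] [StarOrderedRing A]

theorem apply_le_norm_of_cfc_le {f : ℝ → ℝ} {c d : A} {x : ℝ} (hx : x ∈ spectrum ℝ c)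
    (hfd : cfc f c ≤ d) (hf : ContinuousOn f (spectrum ℝ c) := by cfc_cont_tac)
    (hc : IsSelfAdjoint c := by cfc_tac) (hd : IsSelfAdjoint d := by cfc_tac) :
    f x ≤ ‖d‖ :=
  (cfc_le_algebraMap_iff f ‖d‖ c).mp (hfd.trans hd.le_algebraMap_norm_self) x hx

theorem CFC.rpow_tangent_le (a : A) {l r : ℝ} (hl : 0 ≤ l) (hr : 1 ≤ r)
    (ha : 0 ≤ a := by cfc_tac) :
    algebraMap ℝ A (l ^ r - r * l ^ (r - 1) * l) + (r * l ^ (r - 1)) • a ≤ a ^ r := by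
  rw [← cfc_const_add_const_mul_id .., CFC.rpow_eq_cfc_real]
  refine cfc_mono (fun t ht ↦ ?_) (hg := (Real.continuous_rpow_const (by linarith)).continuousOn)
  linarith [Real.rpow_tangent_le (spectrum_nonneg_of_nonneg ha ht) hl hr]

theorem CFC.norm_convexComb_rpow_le {a b : A} {θ r : ℝ} (hθ₀ : 0 ≤ θ) (hθ₁ : θ ≤ 1) (hr : 1 ≤ r)
    (ha : 0 ≤ a := by cfc_tac) (hb : 0 ≤ b := by cfc_tac) :
    ‖(θ • a + (1 - θ) • b) ^ r‖ ≤ ‖θ • a ^ r + (1 - θ) • b ^ r‖ := by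
  nontriviality A
  have hθ₁' : 0 ≤ 1 - θ := sub_nonneg.mpr hθ₁
  set c := θ • a + (1 - θ) • b
  have hc : 0 ≤ c := by positivity
  set l := ‖c‖
  set κ := r * l ^ (r - 1)
  set δ := l ^ r - κ * l
  have tangent : algebraMap ℝ A δ + κ • c ≤ θ • a ^ r + (1 - θ) • b ^ r :=
    calc algebraMap ℝ A δ + κ • c
        = θ • (algebraMap ℝ A δ + κ • a) + (1 - θ) • (algebraMap ℝ A δ + κ • b) := by module
      _ ≤ θ • a ^ r + (1 - θ) • b ^ r := by
        gcongr
        exacts [CFC.rpow_tangent_le a (norm_nonneg c) hr, CFC.rpow_tangent_le b (norm_nonneg c) hr]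
  rw [← cfc_const_add_const_mul_id ..] at tangent
  calc ‖c ^ r‖ = δ + κ * l := by rw [CFC.norm_rpow c (by linarith)]; ring
    _ ≤ ‖θ • a ^ r + (1 - θ) • b ^ r‖ :=
      apply_le_norm_of_cfc_le (f := fun t ↦ δ + κ * t)
        (CStarAlgebra.norm_mem_spectrum_of_nonneg hc) tangent

end CStarAlgebra

theorem stmt_15 {H : Type*} [NormedAddCommGroup H] [InnerProductSpace ℂ H] [CompleteSpace H]
    (A B : H →L[ℂ] H) (hA : 0 ≤ A) (hB : 0 ≤ B) (r : ℝ) (hr : 1 ≤ r) :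
    ‖CFC.rpow ((1 / 2 : ℝ) • (A + B)) r‖ ≤
      (1 / 2) * ‖CFC.rpow A r + CFC.rpow B r‖ := by
  have h := CFC.norm_convexComb_rpow_le (θ := 1 / 2) (by norm_num) (by norm_num) hr hA hB
  rw [show (1 : ℝ) - 1 / 2 = 1 / 2 by norm_num, ← smul_add, ← smul_add, norm_smul] at h
  simpa using h
end

section
/- Let T be a bounded self-adjoint operator on a complex Hilbert space H, x ∈ H a unit vector, and f a convex continuous function on an interval containing the spectrum of T. Then f(⟨Tx,x⟩) ≤ ⟨f(T)x,x⟩. -/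
/-!
The functional `A ↦ re ⟪A x, x⟫` is a state: `ℝ`-linear, monotone and unital. For any state `φ`,
`φ a` lies between the least and greatest points of the spectrum of `a`, and an affine function
`ℓ ≤ f` on the spectrum gives `ℓ (φ a) = φ (ℓ a) ≤ φ (f a)` by monotonicity of the functional
calculus. It remains to find, for each `ε > 0`, such an `ℓ` with `ℓ (φ a) ≥ f (φ a) - ε`. At an
interior point of `I` the right derivative gives an exact supporting line. At an endpoint the
one-sided slopes may be infinite; there a secant slope capped at `0` works, by continuity near
the endpoint and by monotonicity of slopes away from it.
-/

open Set

namespace ConvexOn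

variable {S : Set ℝ} {f : ℝ → ℝ} {m : ℝ}

theorem add_rightDeriv_mul_sub_le (hf : ConvexOn ℝ S f) (hm : m ∈ interior S) {t : ℝ}
    (ht : t ∈ S) : f m + derivWithin f (Ioi m) m * (t - m) ≤ f t := by
  rcases lt_trichotomy t m with htm | rfl | hmt
  · have h := (hf.slope_le_leftDeriv_of_mem_interior ht hm htm).trans
      (hf.leftDeriv_le_rightDeriv_of_mem_interior hm)
    rw [slope_def_field, div_le_iff₀ (sub_pos.2 htm)] at h
    linarith
  · simp
  · have h := hf.rightDeriv_le_slope_of_mem_interior hm ht hmt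
    rw [slope_def_field, le_div_iff₀ (sub_pos.2 hmt)] at h
    linarith

theorem exists_affine_le_of_isLeast (hf : ConvexOn ℝ S f) (hfm : ContinuousWithinAt f S m)
    (hm : IsLeast S m) {ε : ℝ} (hε : 0 < ε) :
    ∃ c : ℝ, ∀ t ∈ S, f m - ε + c * (t - m) ≤ f t := by
  obtain ⟨δ, hδ, hnear⟩ := Metric.continuousWithinAt_iff.mp hfm ε hε
  have near : ∀ t ∈ S, t < m + δ → f m - ε < f t := fun t ht htδ => by
    have h := hnear ht (by rw [Real.dist_eq, abs_of_nonneg (sub_nonneg.2 (hm.2 ht))]; linarith)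
    rw [Real.dist_eq, abs_lt] at h
    linarith
  by_cases hright : ∃ t ∈ S, m < t
  · obtain ⟨t₀, ht₀, hmt₀⟩ := hright
    set r := min (m + δ / 2) t₀
    have hmr : m < r := lt_min (by linarith) hmt₀
    have hr : r ∈ S := hf.1.ordConnected.out hm.1 ht₀ ⟨hmr.le, min_le_right _ _⟩
    refine ⟨min (slope f m r) 0, fun t ht => ?_⟩
    rcases le_or_gt t r with htr | hrt
    · have hft := near t ht (by linarith [min_le_left (m + δ / 2) t₀])
      have := mul_nonpos_of_nonpos_of_nonneg (min_le_right (slope f m r) 0)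
        (sub_nonneg.2 (hm.2 ht))
      linarith
    · have h := (min_le_left _ (0 : ℝ)).trans (hf.slope_mono hm.1 ⟨hr, hmr.ne'⟩
        ⟨ht, (hmr.trans hrt).ne'⟩ hrt.le)
      rw [slope_def_field f m t, le_div_iff₀ (by linarith)] at h
      linarith
  · refine ⟨0, fun t ht => ?_⟩
    obtain rfl : t = m := le_antisymm (not_lt.1 fun h => hright ⟨t, ht, h⟩) (hm.2 ht)
    linarith

theorem exists_affine_le_of_isGreatest (hf : ConvexOn ℝ S f) (hfm : ContinuousWithinAt f S m)
    (hm : IsGreatest S m) {ε : ℝ} (hε : 0 < ε) :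
    ∃ c : ℝ, ∀ t ∈ S, f m - ε + c * (t - m) ≤ f t := by
  have hf' : ConvexOn ℝ (Neg.neg ⁻¹' S) (fun t => f (-t)) := hf.comp_linearMap (-LinearMap.id)
  have hfm' : ContinuousWithinAt (fun t => f (-t)) (Neg.neg ⁻¹' S) (-m) := by
    exact ContinuousWithinAt.comp (by rwa [neg_neg]) continuous_neg.continuousWithinAt
      (mapsTo_preimage _ _)
  have hm' : IsLeast (Neg.neg ⁻¹' S) (-m) :=
    ⟨by simpa using hm.1, fun t ht => neg_le.1 (hm.2 ht)⟩
  obtain ⟨c, hc⟩ := hf'.exists_affine_le_of_isLeast hfm' hm' hε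
  refine ⟨-c, fun t ht => ?_⟩
  have h := hc (-t) (by simpa using ht)
  simp only [neg_neg] at h
  linarith

theorem exists_affine_le (hf : ConvexOn ℝ S f) (hfm : ContinuousWithinAt f S m) (hm : m ∈ S)
    {ε : ℝ} (hε : 0 < ε) : ∃ c : ℝ, ∀ t ∈ S, f m - ε + c * (t - m) ≤ f t := by
  by_cases hleast : ∀ t ∈ S, m ≤ t
  · exact hf.exists_affine_le_of_isLeast hfm ⟨hm, hleast⟩ hε
  by_cases hgreatest : ∀ t ∈ S, t ≤ m
  · exact hf.exists_affine_le_of_isGreatest hfm ⟨hm, hgreatest⟩ hε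
  push Not at hleast hgreatest
  obtain ⟨s, hs, hsm⟩ := hleast
  obtain ⟨u, hu, hmu⟩ := hgreatest
  have hint : m ∈ interior S :=
    interior_mono (Ioo_subset_Icc_self.trans (hf.1.ordConnected.out hs hu))
      (by rw [isOpen_Ioo.interior_eq]; exact ⟨hsm, hmu⟩)
  refine ⟨derivWithin f (Ioi m) m, fun t ht => ?_⟩
  linarith [hf.add_rightDeriv_mul_sub_le hint ht]

end ConvexOn

theorem LinearMap.map_algebraMap_of_map_one {R A : Type*} [CommSemiring R] [Semiring A]
    [Algebra R A] (φ : A →ₗ[R] R) (hφ : φ 1 = 1) (r : R) : φ (algebraMap R A r) = r := by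
  rw [Algebra.algebraMap_eq_smul_one, φ.map_smul, hφ, smul_eq_mul, mul_one]

section State

variable {A : Type*} [Ring A] [StarRing A] [PartialOrder A] [StarOrderedRing A]
  [TopologicalSpace A] [Algebra ℝ A] [ContinuousFunctionalCalculus ℝ A IsSelfAdjoint]

theorem map_mem_of_spectrum_subset (φ : A →ₗ[ℝ] ℝ) (hφ : Monotone φ) (hφ1 : φ 1 = 1) {a : A}
    (ha : IsSelfAdjoint a) {I : Set ℝ} (hI : Convex ℝ I) (hspec : spectrum ℝ a ⊆ I) :
    φ a ∈ I := by
  have : Nontrivial A := ⟨⟨1, 0, fun h => by simp [h] at hφ1⟩⟩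
  have hne := ContinuousFunctionalCalculus.spectrum_nonempty (R := ℝ) a ha
  have hcpt := ContinuousFunctionalCalculus.isCompact_spectrum (R := ℝ) a
  have hlow : algebraMap ℝ A (sInf (spectrum ℝ a)) ≤ a :=
    (cfc_const _ a).symm.trans_le <| (cfc_mono fun t ht => csInf_le hcpt.bddBelow ht).trans_eq
      (cfc_id ℝ a)
  have hup : a ≤ algebraMap ℝ A (sSup (spectrum ℝ a)) :=
    (cfc_id ℝ a).symm.trans_le <| (cfc_mono fun t ht => le_csSup hcpt.bddAbove ht).trans_eq
      (cfc_const _ a)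
  refine hI.ordConnected.out (hspec (hcpt.sInf_mem hne)) (hspec (hcpt.sSup_mem hne)) ⟨?_, ?_⟩
  · simpa only [φ.map_algebraMap_of_map_one hφ1] using hφ hlow
  · simpa only [φ.map_algebraMap_of_map_one hφ1] using hφ hup

theorem le_map_cfc_of_convexOn (φ : A →ₗ[ℝ] ℝ) (hφ : Monotone φ) (hφ1 : φ 1 = 1) {a : A}
    (ha : IsSelfAdjoint a) {f : ℝ → ℝ} {I : Set ℝ} (hspec : spectrum ℝ a ⊆ I)
    (hf : ConvexOn ℝ I f) (hfc : ContinuousOn f I) : f (φ a) ≤ φ (cfc f a) := by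
  set m := φ a
  have hm : m ∈ I := map_mem_of_spectrum_subset φ hφ hφ1 ha hf.1 hspec
  refine le_of_forall_pos_le_add fun ε hε => ?_
  obtain ⟨c, hc⟩ := hf.exists_affine_le (hfc m hm) hm hε
  have hcfc : algebraMap ℝ A (f m - ε - c * m) + c • a ≤ cfc f a := by
    rw [← cfc_const_mul_id c a, ← cfc_const_add (f m - ε - c * m) (fun t => c * t) a]
    exact cfc_mono (fun t ht => by linarith [hc t (hspec ht)]) (by fun_prop) (hfc.mono hspec)
  have := hφ hcfc
  rw [map_add, φ.map_smul, φ.map_algebraMap_of_map_one hφ1, smul_eq_mul] at this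
  linarith

end State

open scoped InnerProductSpace

section VectorState

variable {H : Type*} [NormedAddCommGroup H] [InnerProductSpace ℂ H]

noncomputable def vectorState (x : H) : (H →L[ℂ] H) →ₗ[ℝ] ℝ where
  toFun A := (⟪A x, x⟫_ℂ).re
  map_add' A B := by simp only [add_apply, inner_add_left, Complex.add_re]
  map_smul' r A := by simp

theorem vectorState_apply (x : H) (A : H →L[ℂ] H) : vectorState x A = (⟪A x, x⟫_ℂ).re := rfl

theorem vectorState_mono (x : H) : Monotone (vectorState x) := fun A B hAB => by
  have h := ((ContinuousLinearMap.le_def A B).1 hAB).re_inner_nonneg_left x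
  rw [sub_apply, inner_sub_left, map_sub] at h
  exact sub_nonneg.1 h

theorem vectorState_one {x : H} (hx : ‖x‖ = 1) : vectorState x 1 = 1 := by
  simp [vectorState_apply, inner_self_eq_norm_sq_to_K, hx]

end VectorState

theorem stmt_17 {H : Type*} [NormedAddCommGroup H] [InnerProductSpace ℂ H] [CompleteSpace H]
    (T : H →L[ℂ] H) (hT : IsSelfAdjoint T) (x : H) (hx : ‖x‖ = 1)
    (f : ℝ → ℝ) (I : Set ℝ) (hIspec : spectrum ℝ T ⊆ I)
    (hconv : ConvexOn ℝ I f) (hcont : ContinuousOn f I) :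
    f ((⟪T x, x⟫_ℂ).re) ≤ (⟪(cfc f T) x, x⟫_ℂ).re :=
  le_map_cfc_of_convexOn (vectorState x) (vectorState_mono x) (vectorState_one hx) hT hIspec
    hconv hcont
end

section
/- Let T be a bounded linear operator on a complex Hilbert space H. Then ω²(T) ≤ (1/2)‖|T|² + |T*|²‖, i.e., (sup_{‖x‖=1}|⟨Tx,x⟩|)² ≤ (1/2)‖T*T + TT*‖. -/
set_option synthInstance.maxHeartbeats 1000000
set_option maxHeartbeats 1000000

open scoped InnerProductSpace

theorem stmt_19 {H : Type*} [NormedAddCommGroup H] [InnerProductSpace ℂ H] [CompleteSpace H]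
    (T : H →L[ℂ] H) :
    numRadius T ^ 2 ≤
      (1 / 2) * ‖(ContinuousLinearMap.adjoint T) * T + T * (ContinuousLinearMap.adjoint T)‖ := by
  set S := (ContinuousLinearMap.adjoint T) * T + T * (ContinuousLinearMap.adjoint T) with hS
  have hc : (0:ℝ) ≤ (1/2) * ‖S‖ := by positivity
  have key : ∀ x : H, ‖x‖ = 1 → ‖⟪T x, x⟫_ℂ‖ ≤ Real.sqrt ((1/2) * ‖S‖) := by
    intro x hx
    have h1 : ‖⟪T x, x⟫_ℂ‖ ≤ ‖T x‖ := by
      calc ‖⟪T x, x⟫_ℂ‖ ≤ ‖T x‖ * ‖x‖ := norm_inner_le_norm _ _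
        _ = ‖T x‖ := by rw [hx, mul_one]
    have h2 : ‖⟪T x, x⟫_ℂ‖ ≤ ‖(ContinuousLinearMap.adjoint T) x‖ := by
      have he : ⟪T x, x⟫_ℂ = ⟪x, (ContinuousLinearMap.adjoint T) x⟫_ℂ := by
        rw [ContinuousLinearMap.adjoint_inner_right]
      rw [he]
      calc ‖⟪x, (ContinuousLinearMap.adjoint T) x⟫_ℂ‖
          ≤ ‖x‖ * ‖(ContinuousLinearMap.adjoint T) x‖ := norm_inner_le_norm _ _
        _ = _ := by rw [hx, one_mul]
    have hre : ‖T x‖ ^ 2 + ‖(ContinuousLinearMap.adjoint T) x‖ ^ 2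
        = Complex.re ⟪S x, x⟫_ℂ := by
      have e1 : ⟪(ContinuousLinearMap.adjoint T) (T x), x⟫_ℂ = ⟪T x, T x⟫_ℂ := by
        rw [ContinuousLinearMap.adjoint_inner_left]
      have e2 : ⟪T ((ContinuousLinearMap.adjoint T) x), x⟫_ℂ
          = ⟪(ContinuousLinearMap.adjoint T) x, (ContinuousLinearMap.adjoint T) x⟫_ℂ := by
        rw [← ContinuousLinearMap.adjoint_inner_right]
      rw [hS]
      simp only [ContinuousLinearMap.add_apply, ContinuousLinearMap.mul_apply,
        inner_add_left, Complex.add_re, e1, e2]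
      have := @inner_self_eq_norm_sq ℂ H _ _ _ (T x)
      have := @inner_self_eq_norm_sq ℂ H _ _ _ ((ContinuousLinearMap.adjoint T) x)
      simp only [RCLike.re_to_complex] at *
      linarith
      
    have hSx : Complex.re ⟪S x, x⟫_ℂ ≤ ‖S‖ := by
      calc Complex.re ⟪S x, x⟫_ℂ ≤ ‖⟪S x, x⟫_ℂ‖ := Complex.re_le_norm _
        _ ≤ ‖S x‖ * ‖x‖ := norm_inner_le_norm _ _
        _ ≤ ‖S‖ * ‖x‖ * ‖x‖ := by
            gcongr
            exact S.le_opNorm x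
        _ = ‖S‖ := by rw [hx]; ring
    have hsq : ‖⟪T x, x⟫_ℂ‖ ^ 2 ≤ (1/2) * ‖S‖ := by
      nlinarith [norm_nonneg (⟪T x, x⟫_ℂ), norm_nonneg (T x),
        norm_nonneg ((ContinuousLinearMap.adjoint T) x)]
    have := Real.sqrt_le_sqrt hsq
    rwa [Real.sqrt_sq (norm_nonneg _)] at this
  have hb : numRadius T ≤ Real.sqrt ((1/2) * ‖S‖) := by
    apply Real.iSup_le
    · rintro ⟨x, hx⟩
      exact key x hx
    · exact Real.sqrt_nonneg _
  have hnn : 0 ≤ numRadius T := Real.iSup_nonneg fun x => norm_nonneg _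
  calc numRadius T ^ 2 ≤ Real.sqrt ((1/2) * ‖S‖) ^ 2 := by
        exact pow_le_pow_left₀ hnn hb 2
    _ = (1/2) * ‖S‖ := Real.sq_sqrt hc
end
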